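/- arXiv:1102.4478 — 2 statements merged into one kernel-verified Lean document; each statement's English description precedes it below -/
import Mathlib

section
/- Let γ : ℝ → ℝ² be a C^∞ curve with a 3/2-cusp at t = 0. Then there exists a C^∞ function F on a neighborhood of 0 such that F(t) = √(|s_g(t)|)·κ_g(t) for all t ≠ 0 near 0; that is, the normalized curvature function √(|s_g|)·κ_g extends to a C^∞ function of t at t = 0. -/
noncomputable section
open Real Set Filter Topology

/-- The determinant `[a, b] = a₁b₂ − a₂b₁` of two vectors in the plane. -/
def det2 (a b : ℝ × ℝ) : ℝ := a.1 * b.2 - a.2 * b.1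

/-- The Euclidean norm on `ℝ × ℝ`. -/
def enorm2 (a : ℝ × ℝ) : ℝ := Real.sqrt (a.1 ^ 2 + a.2 ^ 2)

/-- The Euclidean arclength parameter of `γ` based at `0`. -/
def sG (γ : ℝ → ℝ × ℝ) (t : ℝ) : ℝ := ∫ u in (0:ℝ)..t, enorm2 (deriv γ u)

/-- The affine arclength parameter of `γ` based at `0`. -/
def sA (γ : ℝ → ℝ × ℝ) (t : ℝ) : ℝ :=
  ∫ u in (0:ℝ)..t, |det2 (deriv γ u) (iteratedDeriv 2 γ u)| ^ ((1:ℝ)/3)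

/-- The Euclidean curvature `κ_g = [γ', γ'']/‖γ'‖³`. -/
def kappaG (γ : ℝ → ℝ × ℝ) (t : ℝ) : ℝ :=
  det2 (deriv γ t) (iteratedDeriv 2 γ t) / enorm2 (deriv γ t) ^ 3

/-- The affine curvature `κ_A`. -/
def kappaA (γ : ℝ → ℝ × ℝ) (t : ℝ) : ℝ :=
  (3 * det2 (deriv γ t) (iteratedDeriv 2 γ t) * det2 (deriv γ t) (iteratedDeriv 4 γ t)
    + 12 * det2 (deriv γ t) (iteratedDeriv 2 γ t)
        * det2 (iteratedDeriv 2 γ t) (iteratedDeriv 3 γ t)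
    - 5 * det2 (deriv γ t) (iteratedDeriv 3 γ t) ^ 2)
  / (9 * |det2 (deriv γ t) (iteratedDeriv 2 γ t)| ^ ((8:ℝ)/3))

/-- `γ` has a 3/2-cusp at `t = 0`. -/
def HasCusp (γ : ℝ → ℝ × ℝ) : Prop :=
  deriv γ 0 = 0 ∧ det2 (iteratedDeriv 2 γ 0) (iteratedDeriv 3 γ 0) ≠ 0

/-- The Euclidean cuspidal curvature at a 3/2-cusp `t = 0`. -/
def muG (γ : ℝ → ℝ × ℝ) : ℝ :=
  det2 (iteratedDeriv 2 γ 0) (iteratedDeriv 3 γ 0) / enorm2 (iteratedDeriv 2 γ 0) ^ ((5:ℝ)/2)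

/-- The affine cuspidal curvature at a 3/2-cusp `t = 0`. -/
def muA (γ : ℝ → ℝ × ℝ) : ℝ :=
  (24 * det2 (iteratedDeriv 2 γ 0) (iteratedDeriv 3 γ 0)
      * det2 (iteratedDeriv 2 γ 0) (iteratedDeriv 5 γ 0)
   + 60 * det2 (iteratedDeriv 2 γ 0) (iteratedDeriv 3 γ 0)
      * det2 (iteratedDeriv 3 γ 0) (iteratedDeriv 4 γ 0)
   - 35 * det2 (iteratedDeriv 2 γ 0) (iteratedDeriv 4 γ 0) ^ 2)
  / |det2 (iteratedDeriv 2 γ 0) (iteratedDeriv 3 γ 0)| ^ ((12:ℝ)/5)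

/-- `γ` (regular at `0`) has a generic inflection point at `t = 0`. -/
def HasGenericInflection (γ : ℝ → ℝ × ℝ) : Prop :=
  deriv γ 0 ≠ 0 ∧ det2 (deriv γ 0) (iteratedDeriv 2 γ 0) = 0 ∧
    det2 (deriv γ 0) (iteratedDeriv 3 γ 0) ≠ 0

/-- The affine inflectional curvature at a generic inflection point `t = 0`. -/
def muI (γ : ℝ → ℝ × ℝ) : ℝ :=
  Real.sign (det2 (deriv γ 0) (iteratedDeriv 3 γ 0)) *
    (det2 (deriv γ 0) (iteratedDeriv 4 γ 0)
      - 6 * det2 (iteratedDeriv 2 γ 0) (iteratedDeriv 3 γ 0))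
  / |det2 (deriv γ 0) (iteratedDeriv 3 γ 0)| ^ ((5:ℝ)/4)

/-- The affine map `x ↦ Ax + v` on the plane, with `A = (a b; c d)`. -/
def applyAff (a b c d : ℝ) (v : ℝ × ℝ) (p : ℝ × ℝ) : ℝ × ℝ :=
  (a * p.1 + b * p.2 + v.1, c * p.1 + d * p.2 + v.2)

/-! Since `γ'(0) = 0`, Hadamard's lemma writes `γ'(t) = t • A(t)` with `A` smooth and
`A(0) = γ''(0) ≠ 0`. Then `‖γ'‖ = |t| ‖A‖`, `[γ', γ''] = t² [A, A']`, and
`s_g(t) = ∫₀ᵗ |u| ‖A(u)‖ du = t |t| H(t)` with `H(t) = ∫₀¹ s ‖A(st)‖ ds` smooth and positive.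
The powers of `|t|` cancel: `√|s_g| κ_g = √H [A, A'] / ‖A‖³`. -/

open MeasureTheory intervalIntegral Function

theorem fst_sq_add_snd_sq_pos {a : ℝ × ℝ} (ha : a ≠ 0) : 0 < a.1 ^ 2 + a.2 ^ 2 := by
  obtain ⟨x, y⟩ := a
  rcases not_and_or.mp (mt Prod.mk_eq_zero.mpr ha) with h | h <;> positivity

section

variable {E : Type*} [NormedAddCommGroup E] [NormedSpace ℝ E]

theorem hasDerivAt_intervalIntegral_of_contDiff {G : ℝ → ℝ → E} (hG : ContDiff ℝ 1 (uncurry G))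
    (a b x₀ : ℝ) :
    HasDerivAt (fun x => ∫ s in a..b, G s x)
      (∫ s in a..b, fderiv ℝ (uncurry G) (s, x₀) (0, 1)) x₀ := by
  have hGc : Continuous (uncurry G) := hG.continuous
  have hG'c : Continuous fun p : ℝ × ℝ => fderiv ℝ (uncurry G) p (0, 1) :=
    (hG.continuous_fderiv one_ne_zero).clm_apply continuous_const
  obtain ⟨C, hC⟩ := (isCompact_uIcc.prod (isCompact_closedBall x₀ 1)).exists_bound_of_continuousOn
    hG'c.continuousOn
  refine (hasDerivAt_integral_of_dominated_loc_of_deriv_le (bound := fun _ => C)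
    (Metric.ball_mem_nhds x₀ one_pos)
    (Eventually.of_forall fun x => (hGc.comp₂ continuous_id continuous_const).aestronglyMeasurable)
    ((hGc.comp₂ continuous_id continuous_const).intervalIntegrable _ _)
    (hG'c.comp₂ continuous_id continuous_const).aestronglyMeasurable
    (ae_of_all _ fun s hs x hx =>
      hC (s, x) ⟨uIoc_subset_uIcc hs, Metric.ball_subset_closedBall hx⟩)
    intervalIntegrable_const
    (ae_of_all _ fun s _ x _ => ?_)).2
  exact (hG.differentiable one_ne_zero (s, x)).hasFDerivAt.comp_hasDerivAt x
    ((hasDerivAt_const x s).prodMk (hasDerivAt_id x))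

theorem contDiff_nat_intervalIntegral_of_contDiff (n : ℕ) {G : ℝ → ℝ → E}
    (hG : ContDiff ℝ n (uncurry G)) (a b : ℝ) :
    ContDiff ℝ n fun x => ∫ s in a..b, G s x := by
  induction n generalizing G with
  | zero => exact contDiff_zero.mpr (continuous_parametric_intervalIntegral_of_continuous'
      (f := fun x s => G s x) (hG.continuous.comp continuous_swap) a b)
  | succ n ih =>
    have hG1 : ContDiff ℝ 1 (uncurry G) := hG.of_le (by exact_mod_cast le_add_self)
    push_cast at hG ⊢
    refine contDiff_succ_iff_deriv.mpr ⟨fun x =>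
      (hasDerivAt_intervalIntegral_of_contDiff hG1 a b x).differentiableAt, by simp, ?_⟩
    rw [funext fun x => (hasDerivAt_intervalIntegral_of_contDiff hG1 a b x).deriv]
    exact ih (G := fun s x => fderiv ℝ (uncurry G) (s, x) (0, 1))
      ((hG.fderiv_right le_rfl).clm_apply contDiff_const)

theorem contDiff_intervalIntegral_of_contDiff {n : ℕ∞} {G : ℝ → ℝ → E}
    (hG : ContDiff ℝ n (uncurry G)) (a b : ℝ) :
    ContDiff ℝ n fun x => ∫ s in a..b, G s x :=
  contDiff_iff_forall_nat_le.mpr fun m hm =>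
    contDiff_nat_intervalIntegral_of_contDiff m (hG.of_le (by exact_mod_cast hm)) a b

theorem exists_contDiff_smul_eq_of_eq_zero [CompleteSpace E] {n : ℕ∞} {f : ℝ → E}
    (hf : ContDiff ℝ (n + 1) f) (h0 : f 0 = 0) :
    ∃ g : ℝ → E, ContDiff ℝ n g ∧ ∀ t, f t = t • g t := by
  have hf' : ContDiff ℝ n (deriv f) := (contDiff_succ_iff_deriv.mp (by exact_mod_cast hf)).2.2
  refine ⟨fun t => ∫ s in (0:ℝ)..1, deriv f (s * t),
    contDiff_intervalIntegral_of_contDiff (hf'.comp (contDiff_fst.mul contDiff_snd)) 0 1,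
    fun t => ?_⟩
  rw [smul_integral_comp_mul_right, zero_mul, one_mul,
    integral_deriv_eq_sub (fun x _ => hf.differentiable (by simp) x)
      (hf'.continuous.intervalIntegrable _ _), h0, sub_zero]

theorem exists_contDiff_deriv_eq_smul [CompleteSpace E] {γ : ℝ → E} (hγ : ContDiff ℝ (⊤:ℕ∞) γ)
    (h0 : deriv γ 0 = 0) :
    ∃ A : ℝ → E, ContDiff ℝ (⊤:ℕ∞) A ∧ (∀ t, deriv γ t = t • A t) ∧
      ∀ t, iteratedDeriv 2 γ t = A t + t • deriv A t := by
  obtain ⟨A, hA, hγA⟩ := exists_contDiff_smul_eq_of_eq_zero (n := ⊤) (f := deriv γ)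
    (hγ.iterate_deriv 1) h0
  refine ⟨A, hA, hγA, fun t => ?_⟩
  rw [iteratedDeriv_eq_iterate, Function.iterate_succ_apply', Function.iterate_one, funext hγA]
  exact ((hasDerivAt_id' t).smul (hA.differentiable (by simp) t).hasDerivAt).deriv.trans
    (by simp [add_comm])

theorem intervalIntegral_congr_of_abs_lt {f g : ℝ → E} {ε t : ℝ}
    (hfg : ∀ u, |u| < ε → f u = g u) (ht : |t| < ε) :
    ∫ u in (0:ℝ)..t, f u = ∫ u in (0:ℝ)..t, g u :=
  integral_congr fun u hu =>
    hfg u (lt_of_le_of_lt (by simpa using abs_sub_left_of_mem_uIcc hu) ht)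

theorem exists_contDiff_pos_eventuallyEq [HasContDiffBump E] {n : ℕ∞} {p : E → ℝ} {x₀ : E}
    (hp : ContDiff ℝ n p) (hp_nonneg : ∀ x, 0 ≤ p x) (hx₀ : 0 < p x₀) :
    ∃ q : E → ℝ, ContDiff ℝ n q ∧ (∀ x, 0 < q x) ∧ q =ᶠ[𝓝 x₀] p := by
  obtain ⟨R, hR, hpR⟩ := Metric.eventually_nhds_iff_ball.mp
    (hp.continuous.continuousAt.eventually (eventually_gt_nhds hx₀))
  let φ : ContDiffBump x₀ := ⟨R / 2, R, half_pos hR, half_lt_self hR⟩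
  refine ⟨fun x => p x + (1 - φ x), hp.add (contDiff_const.sub φ.contDiff), fun x => ?_, ?_⟩
  · by_cases hx : x ∈ Metric.ball x₀ R
    · linarith [hpR x hx, φ.le_one (x := x)]
    · have : φ x = 0 := φ.zero_of_le_dist (by simpa using hx)
      linarith [hp_nonneg x]
  · filter_upwards [φ.eventuallyEq_one] with x hx
    simp [hx]

-- `‖A‖` is smooth only where `A ≠ 0`; the parametric integrals need a globally smooth integrand.
theorem exists_contDiff_pos_eventuallyEq_enorm2 [HasContDiffBump E] {n : ℕ∞} {A : E → ℝ × ℝ}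
    {x₀ : E} (hA : ContDiff ℝ n A) (hx₀ : A x₀ ≠ 0) :
    ∃ w : E → ℝ, ContDiff ℝ n w ∧ (∀ x, 0 < w x) ∧ ∀ᶠ x in 𝓝 x₀, enorm2 (A x) = w x := by
  obtain ⟨q, hq, hq_pos, hqA⟩ := exists_contDiff_pos_eventuallyEq
    ((hA.fst.pow 2).add (hA.snd.pow 2)) (fun x => by positivity) (fst_sq_add_snd_sq_pos hx₀)
  exact ⟨fun x => Real.sqrt (q x), hq.sqrt fun x => (hq_pos x).ne',
    fun x => Real.sqrt_pos.mpr (hq_pos x), (hqA.fun_comp Real.sqrt).symm⟩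

end

theorem integral_abs_mul_eq_mul_abs_mul_integral (g : ℝ → ℝ) (t : ℝ) :
    ∫ u in (0:ℝ)..t, |u| * g u = t * |t| * ∫ s in (0:ℝ)..1, s * g (s * t) := by
  have h := smul_integral_comp_mul_right (a := 0) (b := 1) (fun u => |u| * g u) t
  rw [zero_mul, one_mul] at h
  rw [← h, smul_eq_mul, mul_assoc, ← intervalIntegral.integral_const_mul |t|]
  refine congrArg (t * ·) (integral_congr fun s hs => ?_)
  rw [uIcc_of_le zero_le_one] at hs
  simp only [abs_mul, abs_of_nonneg hs.1]
  ring

theorem exists_contDiff_pos_integral_abs_mul_eq {n : ℕ∞} {w : ℝ → ℝ} (hw : ContDiff ℝ n w)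
    (hw_pos : ∀ t, 0 < w t) :
    ∃ H : ℝ → ℝ, ContDiff ℝ n H ∧ (∀ t, 0 < H t) ∧
      ∀ t, ∫ u in (0:ℝ)..t, |u| * w u = t * |t| * H t := by
  refine ⟨fun t => ∫ s in (0:ℝ)..1, s * w (s * t),
    contDiff_intervalIntegral_of_contDiff (G := fun s t => s * w (s * t))
      (contDiff_fst.mul (hw.comp (contDiff_fst.mul contDiff_snd))) 0 1,
    fun t => intervalIntegral_pos_of_pos_on ?_ (fun s hs => mul_pos hs.1 (hw_pos _)) zero_lt_one,
    integral_abs_mul_eq_mul_abs_mul_integral w⟩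
  exact (continuous_id.mul (hw.continuous.comp (continuous_id.mul continuous_const)))
    |>.intervalIntegrable _ _

theorem enorm2_smul (c : ℝ) (a : ℝ × ℝ) : enorm2 (c • a) = |c| * enorm2 a := by
  rw [enorm2, enorm2, ← Real.sqrt_sq_eq_abs, ← Real.sqrt_mul (sq_nonneg c)]
  simp only [Prod.smul_fst, Prod.smul_snd, smul_eq_mul]
  ring_nf

theorem det2_smul_smul_add (t : ℝ) (a b : ℝ × ℝ) :
    det2 (t • a) (a + t • b) = t ^ 2 * det2 a b := by
  simp only [det2, Prod.smul_fst, Prod.smul_snd, Prod.fst_add, Prod.snd_add, smul_eq_mul]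
  ring

/-- At a 3/2-cusp, the normalized curvature `√|s_g|·κ_g` extends to a `C^∞` function
of `t` at `t = 0`. -/
theorem stmt_1 (γ : ℝ → ℝ × ℝ) (hγ : ContDiff ℝ (⊤:ℕ∞) γ) (hcusp : HasCusp γ) :
    ∃ ε > (0:ℝ), ∃ F : ℝ → ℝ, ContDiffOn ℝ (⊤:ℕ∞) F (Set.Ioo (-ε) ε) ∧
      ∀ t ∈ Set.Ioo (-ε) ε, t ≠ 0 → F t = Real.sqrt |sG γ t| * kappaG γ t := by
  obtain ⟨hγ'0, hdet⟩ := hcusp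
  obtain ⟨A, hA, hγA, hγ''⟩ := exists_contDiff_deriv_eq_smul hγ hγ'0
  have hA0 : A 0 ≠ 0 := fun h => hdet (by simp [hγ'' 0, h, det2])
  obtain ⟨w, hw, hw_pos, hwA⟩ := exists_contDiff_pos_eventuallyEq_enorm2 hA hA0
  obtain ⟨H, hH, hH_pos, hHw⟩ := exists_contDiff_pos_integral_abs_mul_eq hw hw_pos
  obtain ⟨ε, hε, hεw⟩ := Metric.eventually_nhds_iff_ball.mp hwA
  have hwA' : ∀ u, |u| < ε → enorm2 (A u) = w u := fun u hu => hεw u (by simpa using hu)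
  have hA' : ContDiff ℝ (⊤:ℕ∞) (deriv A) := hA.iterate_deriv 1
  refine ⟨ε, hε, fun t => Real.sqrt (H t) * det2 (A t) (deriv A t) / w t ^ 3,
    (((hH.sqrt fun t => (hH_pos t).ne').mul ((hA.fst.mul hA'.snd).sub (hA.snd.mul hA'.fst))).div
      (hw.pow 3) fun t => pow_ne_zero 3 (hw_pos t).ne').contDiffOn, fun t ht ht0 => ?_⟩
  have htε : |t| < ε := abs_lt.mpr ht
  have hsG : sG γ t = t * |t| * H t := by
    rw [← hHw, sG]
    exact intervalIntegral_congr_of_abs_lt (fun u hu => by rw [hγA, enorm2_smul, hwA' u hu]) htε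
  have hκ : kappaG γ t = t ^ 2 * det2 (A t) (deriv A t) / (|t| * w t) ^ 3 := by
    rw [kappaG, hγA, hγ'', det2_smul_smul_add, enorm2_smul, hwA' t htε]
  have hsqrt : Real.sqrt |sG γ t| = |t| * Real.sqrt (H t) := by
    rw [hsG, abs_mul, abs_mul, abs_abs, abs_of_pos (hH_pos t), ← sq,
      Real.sqrt_mul (sq_nonneg _), Real.sqrt_sq (abs_nonneg t)]
  have htabs : |t| ≠ 0 := abs_ne_zero.mpr ht0
  have hwt : w t ≠ 0 := (hw_pos t).ne'
  rw [hsqrt, hκ, ← sq_abs t]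
  field_simp
end
end

section
/- Let γ : ℝ → ℝ² be a C^∞ curve with a 3/2-cusp at t = 0. Then the function τ(t) := sgn(t)·|s_A(t)|^{3/5} extends to a C^∞ function on a neighborhood of 0 with τ(0) = 0 and τ'(0) > 0; in particular τ can be taken as a local coordinate of γ at t = 0 (the 3/5-arclength parameter). -/
noncomputable section
open Real Set Filter Topology

/-!
Write `D(u) = [γ'(u), γ''(u)]`. At a 3/2-cusp `D(0) = D'(0) = 0` and
`D''(0) = [γ''(0), γ'''(0)] ≠ 0`, so Hadamard's lemma applied twice gives `D(u) = u² q(u)` with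
`q` smooth and `q(0) ≠ 0`. Near `0` we then have `|D(u)|^{1/3} = |u|^{2/3} p(u)` with
`p = |q|^{1/3}` smooth and positive, and the substitution `u = ts` gives
`s_A(t) = t |t|^{2/3} R(t)` with `R(t) = ∫₀¹ s^{2/3} p(ts) ds` smooth and `R(0) = 3/5 · p(0) > 0`.
Hence `τ(t) = t R(t)^{3/5}`, which is smooth with `τ'(0) = R(0)^{3/5} > 0`.
-/

open scoped ContDiff
open intervalIntegral

def dilationIntegral (w H : ℝ → ℝ) (x : ℝ) : ℝ := ∫ s in (0:ℝ)..1, w s * H (x * s)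

section DilationIntegral

variable {w H : ℝ → ℝ}

theorem dilationIntegral_zero (w H : ℝ → ℝ) :
    dilationIntegral w H 0 = (∫ s in (0:ℝ)..1, w s) * H 0 := by
  simp [dilationIntegral, intervalIntegral.integral_mul_const]

theorem continuous_dilationIntegral (hw : Continuous w) (hH : Continuous H) :
    Continuous (dilationIntegral w H) :=
  intervalIntegral.continuous_parametric_intervalIntegral_of_continuous'
    (by fun_prop) 0 1

theorem hasDerivAt_dilationIntegral (hw : Continuous w) (hH : ContDiff ℝ 1 H) (x : ℝ) :
    HasDerivAt (dilationIntegral w H) (dilationIntegral (fun s => w s * s) (deriv H) x) x := by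
  have hH' : Continuous (deriv H) := hH.continuous_deriv le_rfl
  obtain ⟨C, hC⟩ : ∃ C, ∀ p ∈ Metric.closedBall x 1 ×ˢ uIcc (0:ℝ) 1,
      ‖w p.2 * p.2 * deriv H (p.1 * p.2)‖ ≤ C :=
    ((isCompact_closedBall x 1).prod isCompact_uIcc).exists_bound_of_continuousOn
      (by fun_prop)
  have hF : ∀ y : ℝ, Continuous fun s => w s * H (y * s) := fun y => by
    have := hH.continuous; fun_prop
  refine (intervalIntegral.hasDerivAt_integral_of_dominated_loc_of_deriv_le
    (F' := fun y s => w s * s * deriv H (y * s)) (bound := fun _ => C)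
    (Metric.ball_mem_nhds x one_pos)
    (.of_forall fun y => (hF y).aestronglyMeasurable.restrict) ((hF x).intervalIntegrable 0 1)
    (by fun_prop : Continuous _).aestronglyMeasurable.restrict
    (.of_forall fun s hs y hy =>
      hC (y, s) ⟨Metric.ball_subset_closedBall hy, uIoc_subset_uIcc hs⟩)
    intervalIntegrable_const (.of_forall fun s _ y _ => ?_)).2
  exact (((hH.differentiable one_ne_zero (y * s)).hasDerivAt.comp y
    (hasDerivAt_mul_const s)).const_mul (w s)).congr_deriv (by ring)

theorem contDiff_dilationIntegral (hw : Continuous w) {n : ℕ} (hH : ContDiff ℝ n H) :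
    ContDiff ℝ n (dilationIntegral w H) := by
  induction n generalizing w H with
  | zero => exact contDiff_zero.mpr (continuous_dilationIntegral hw (contDiff_zero.mp hH))
  | succ n ih =>
    rw [Nat.cast_succ] at hH ⊢
    have hH1 : ContDiff ℝ 1 H := hH.of_le (by simp)
    refine contDiff_succ_iff_deriv.mpr
      ⟨fun x => (hasDerivAt_dilationIntegral hw hH1 x).differentiableAt, by simp, ?_⟩
    rw [funext fun x => (hasDerivAt_dilationIntegral hw hH1 x).deriv]
    exact ih (hw.mul continuous_id) (contDiff_succ_iff_deriv.mp hH).2.2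

theorem contDiff_infty_dilationIntegral (hw : Continuous w) (hH : ContDiff ℝ ∞ H) :
    ContDiff ℝ ∞ (dilationIntegral w H) :=
  contDiff_infty.mpr fun n => contDiff_dilationIntegral hw (hH.of_le (by exact_mod_cast le_top))

end DilationIntegral

section Hadamard

variable {f : ℝ → ℝ}

theorem mul_dilationIntegral_deriv (hf : ContDiff ℝ 1 f) (u : ℝ) :
    u * dilationIntegral (fun _ => 1) (deriv f) u = f u - f 0 := by
  have hftc : ∫ y in (0:ℝ)..u, deriv f y = f u - f 0 :=
    integral_deriv_eq_sub (fun y _ => hf.differentiable one_ne_zero y)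
      ((hf.continuous_deriv le_rfl).intervalIntegrable 0 u)
  have hsub := smul_integral_comp_mul_left (a := 0) (b := 1) (deriv f) u
  rw [mul_zero, mul_one, hftc] at hsub
  simpa [dilationIntegral] using hsub

theorem exists_contDiff_eq_mul (hf : ContDiff ℝ ∞ f) (h0 : f 0 = 0) :
    ∃ g : ℝ → ℝ, ContDiff ℝ ∞ g ∧ (∀ u, f u = u * g u) ∧ g 0 = deriv f 0 ∧
      deriv g 0 = deriv (deriv f) 0 / 2 := by
  have hf' : ContDiff ℝ ∞ (deriv f) := (contDiff_infty_iff_deriv.mp hf).2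
  refine ⟨dilationIntegral (fun _ => 1) (deriv f),
    contDiff_infty_dilationIntegral continuous_const hf',
    fun u => by rw [mul_dilationIntegral_deriv (hf.of_le (by simp)), h0, sub_zero],
    by simp [dilationIntegral_zero], ?_⟩
  rw [(hasDerivAt_dilationIntegral continuous_const (hf'.of_le (by simp)) 0).deriv,
    dilationIntegral_zero]
  simp only [one_mul, integral_id]
  ring

theorem exists_contDiff_eq_sq_mul (hf : ContDiff ℝ ∞ f) (h0 : f 0 = 0) (h1 : deriv f 0 = 0) :
    ∃ q : ℝ → ℝ, ContDiff ℝ ∞ q ∧ (∀ u, f u = u ^ 2 * q u) ∧ q 0 = deriv (deriv f) 0 / 2 := by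
  obtain ⟨g, hg, hfg, hg0, hg'0⟩ := exists_contDiff_eq_mul hf h0
  obtain ⟨q, hq, hgq, hq0, -⟩ := exists_contDiff_eq_mul hg (hg0.trans h1)
  exact ⟨q, hq, fun u => by rw [hfg, hgq]; ring, hq0.trans hg'0⟩

end Hadamard

theorem exists_contDiff_ne_zero_eventuallyEq {E F : Type*} [NormedAddCommGroup E]
    [NormedSpace ℝ E] [HasContDiffBump E] [NormedAddCommGroup F] [NormedSpace ℝ F]
    {f : E → F} {x : E} {n : ℕ∞} (hf : ContDiff ℝ n f) (hx : f x ≠ 0) :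
    ∃ g : E → F, ContDiff ℝ n g ∧ (∀ u, g u ≠ 0) ∧ g =ᶠ[𝓝 x] f := by
  obtain ⟨δ, hδ, hclose⟩ :=
    Metric.continuousAt_iff.mp hf.continuous.continuousAt _ (norm_pos_iff.mpr hx)
  let χ : ContDiffBump x := ⟨δ / 2, δ, half_pos hδ, half_lt_self hδ⟩
  refine ⟨fun u => χ u • (f u - f x) + f x,
    (χ.contDiff.smul (hf.sub contDiff_const)).add contDiff_const, fun u => ?_, ?_⟩
  · by_cases hu : dist u x < δ
    · have hlt : ‖χ u • (f u - f x)‖ < ‖f x‖ := by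
        rw [norm_smul, Real.norm_of_nonneg χ.nonneg, ← dist_eq_norm]
        exact (mul_le_of_le_one_left dist_nonneg χ.le_one).trans_lt (hclose hu)
      intro h0
      rw [add_eq_zero_iff_eq_neg.mp h0, norm_neg] at hlt
      exact lt_irrefl _ hlt
    · simpa [χ.zero_of_le_dist (not_lt.mp hu)] using hx
  · filter_upwards [χ.eventuallyEq_one] with u hu
    simp [hu]

theorem contDiff_abs_rpow {g : ℝ → ℝ} {n : ℕ∞} (hg : ContDiff ℝ n g) (hg_ne : ∀ u, g u ≠ 0)
    (a : ℝ) : ContDiff ℝ n fun u => |g u| ^ a :=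
  contDiff_iff_contDiffAt.mpr fun u => ((contDiffAt_abs (hg_ne u)).comp u
    hg.contDiffAt).rpow_const_of_ne (abs_ne_zero.mpr (hg_ne u))

theorem eventually_forall_uIcc {P : ℝ → Prop} {a : ℝ} (h : ∀ᶠ u in 𝓝 a, P u) :
    ∀ᶠ t in 𝓝 a, ∀ u ∈ uIcc a t, P u := by
  obtain ⟨ε, hε, hP⟩ := Metric.eventually_nhds_iff_ball.mp h
  filter_upwards [Metric.ball_mem_nhds a hε] with t ht u hu
  exact hP u ((convex_ball a ε).segment_subset (Metric.mem_ball_self hε) ht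
    ((segment_eq_uIcc a t).symm ▸ hu))

theorem integral_abs_rpow_mul_eq_dilationIntegral (a : ℝ) (p : ℝ → ℝ) (t : ℝ) :
    ∫ u in (0:ℝ)..t, |u| ^ a * p u = t * |t| ^ a * dilationIntegral (· ^ a) p t := by
  have hsub := smul_integral_comp_mul_left (a := 0) (b := 1) (fun u => |u| ^ a * p u) t
  rw [mul_zero, mul_one] at hsub
  rw [← hsub, smul_eq_mul, mul_assoc, dilationIntegral,
    ← intervalIntegral.integral_const_mul (|t| ^ a)]
  congr 1
  refine integral_congr fun s hs => ?_
  rw [uIcc_of_le zero_le_one] at hs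
  rw [abs_mul, Real.mul_rpow (abs_nonneg _) (abs_nonneg _), abs_of_nonneg hs.1]
  ring

theorem exists_integral_abs_rpow_one_third_eq {f : ℝ → ℝ} (hf : ContDiff ℝ ∞ f) (h0 : f 0 = 0)
    (h1 : deriv f 0 = 0) (h2 : deriv (deriv f) 0 ≠ 0) :
    ∃ R : ℝ → ℝ, ContDiff ℝ ∞ R ∧ 0 < R 0 ∧
      ∀ᶠ t in 𝓝 0, ∫ u in (0:ℝ)..t, |f u| ^ ((1:ℝ)/3) = t * |t| ^ ((2:ℝ)/3) * R t := by
  obtain ⟨q, hq, hfq, hq0⟩ := exists_contDiff_eq_sq_mul hf h0 h1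
  -- `|q|^{1/3}` is smooth only where `q ≠ 0`, but `dilationIntegral` needs a globally smooth
  -- integrand, so `q` is replaced by a nowhere vanishing `g` equal to it near `0`.
  obtain ⟨g, hg, hg_ne, hgq⟩ :=
    exists_contDiff_ne_zero_eventuallyEq hq (hq0 ▸ div_ne_zero h2 two_ne_zero)
  refine ⟨dilationIntegral (· ^ ((2:ℝ)/3)) fun u => |g u| ^ ((1:ℝ)/3),
    contDiff_infty_dilationIntegral (Real.continuous_rpow_const (by norm_num))
      (contDiff_abs_rpow hg hg_ne _), ?_, ?_⟩
  · rw [dilationIntegral_zero, integral_rpow (Or.inl (by norm_num))]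
    exact mul_pos (by norm_num) (Real.rpow_pos_of_pos (abs_pos.mpr (hg_ne 0)) _)
  · filter_upwards [eventually_forall_uIcc hgq] with t hgq
    refine (integral_congr fun u hu => ?_).trans (integral_abs_rpow_mul_eq_dilationIntegral _ _ t)
    rw [hfq, hgq u hu, abs_mul, Real.mul_rpow (abs_nonneg _) (abs_nonneg _), abs_pow,
      ← Real.rpow_natCast, ← Real.rpow_mul (abs_nonneg _)]
    norm_num

theorem Real.sign_mul_abs_mul_rpow_inv {a r : ℝ} (t : ℝ) (ha : a + 1 ≠ 0) (hr : 0 ≤ r) :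
    Real.sign t * |t * |t| ^ a * r| ^ (a + 1)⁻¹ = t * r ^ (a + 1)⁻¹ := by
  rcases eq_or_ne t 0 with rfl | ht
  · simp
  have habs : |t * |t| ^ a * r| = |t| ^ (a + 1) * r := by
    rw [abs_mul, abs_mul, abs_of_nonneg (Real.rpow_nonneg (abs_nonneg t) a), abs_of_nonneg hr,
      Real.rpow_add_one (abs_ne_zero.mpr ht), mul_comm |t|]
  have hsign : Real.sign t * |t| = t := by
    rcases ht.lt_or_gt with h | h
    · simp [Real.sign_of_neg h, abs_of_neg h]
    · simp [Real.sign_of_pos h, abs_of_pos h]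
  rw [habs, Real.mul_rpow (Real.rpow_nonneg (abs_nonneg t) _) hr,
    Real.rpow_rpow_inv (abs_nonneg t) ha, ← mul_assoc, hsign]

theorem det2_self (a : ℝ × ℝ) : det2 a a = 0 := by
  rw [det2]; ring

theorem det2_zero_left (b : ℝ × ℝ) : det2 0 b = 0 := by
  simp [det2]

theorem HasDerivAt.det2 {a b : ℝ → ℝ × ℝ} {a' b' : ℝ × ℝ} {u : ℝ} (ha : HasDerivAt a a' u)
    (hb : HasDerivAt b b' u) :
    HasDerivAt (fun v => _root_.det2 (a v) (b v))
      (_root_.det2 a' (b u) + _root_.det2 (a u) b') u := by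
  have ha₁ : HasDerivAt (fun v => (a v).1) a'.1 u :=
    (hasFDerivAt_fst (p := a u)).comp_hasDerivAt u ha
  have ha₂ : HasDerivAt (fun v => (a v).2) a'.2 u :=
    (hasFDerivAt_snd (p := a u)).comp_hasDerivAt u ha
  have hb₁ : HasDerivAt (fun v => (b v).1) b'.1 u :=
    (hasFDerivAt_fst (p := b u)).comp_hasDerivAt u hb
  have hb₂ : HasDerivAt (fun v => (b v).2) b'.2 u :=
    (hasFDerivAt_snd (p := b u)).comp_hasDerivAt u hb
  exact ((ha₁.mul hb₂).sub (ha₂.mul hb₁)).congr_deriv (by simp only [_root_.det2]; ring)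

theorem ContDiff.det2 {a b : ℝ → ℝ × ℝ} {n : ℕ∞} (ha : ContDiff ℝ n a) (hb : ContDiff ℝ n b) :
    ContDiff ℝ n fun v => _root_.det2 (a v) (b v) := by
  unfold _root_.det2
  fun_prop

section IteratedDeriv

variable {F : Type*} [NormedAddCommGroup F] [NormedSpace ℝ F] {f : ℝ → F}

theorem ContDiff.contDiff_iteratedDeriv (hf : ContDiff ℝ ∞ f) (n : ℕ) :
    ContDiff ℝ ∞ (iteratedDeriv n f) :=
  iteratedDeriv_eq_iterate (f := f) ▸ hf.iterate_deriv n

theorem ContDiff.hasDerivAt_iteratedDeriv (hf : ContDiff ℝ ∞ f) (n : ℕ) (u : ℝ) :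
    HasDerivAt (iteratedDeriv n f) (iteratedDeriv (n + 1) f u) u := by
  rw [iteratedDeriv_succ]
  exact ((hf.contDiff_iteratedDeriv n).differentiable (by simp) u).hasDerivAt

end IteratedDeriv

/-- At a 3/2-cusp, `τ(t) = sgn(t)·|s_A(t)|^{3/5}` extends to a `C^∞` function near `0`
with `τ(0) = 0` and `τ'(0) > 0`, so it is a local coordinate (3/5-arclength parameter). -/
theorem stmt_6 (γ : ℝ → ℝ × ℝ) (hγ : ContDiff ℝ (⊤:ℕ∞) γ) (hcusp : HasCusp γ) :
    ∃ ε > (0:ℝ), ∃ τ : ℝ → ℝ, ContDiffOn ℝ (⊤:ℕ∞) τ (Set.Ioo (-ε) ε) ∧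
      (∀ t ∈ Set.Ioo (-ε) ε, τ t = Real.sign t * |sA γ t| ^ ((3:ℝ)/5)) ∧
      τ 0 = 0 ∧ 0 < deriv τ 0 := by
  obtain ⟨hγ'0, hc⟩ := hcusp
  set D : ℝ → ℝ := fun v => det2 (deriv γ v) (iteratedDeriv 2 γ v)
  have hD' : ∀ u, HasDerivAt D (det2 (deriv γ u) (iteratedDeriv 3 γ u)) u := fun u => by
    have h := (hγ.hasDerivAt_iteratedDeriv 1 u).det2 (hγ.hasDerivAt_iteratedDeriv 2 u)
    rwa [iteratedDeriv_one, det2_self, zero_add] at h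
  have hD'' : HasDerivAt (deriv D) (det2 (iteratedDeriv 2 γ 0) (iteratedDeriv 3 γ 0)) 0 := by
    have h := (hγ.hasDerivAt_iteratedDeriv 1 0).det2 (hγ.hasDerivAt_iteratedDeriv 3 0)
    rw [iteratedDeriv_one, hγ'0, det2_zero_left, add_zero] at h
    rwa [funext fun u => (hD' u).deriv]
  obtain ⟨R, hR, hR0, hsA⟩ := exists_integral_abs_rpow_one_third_eq
    ((contDiff_infty_iff_deriv.mp hγ).2.det2 (hγ.contDiff_iteratedDeriv 2))
    (by simp only [hγ'0, det2_zero_left]) (by rw [(hD' 0).deriv, hγ'0, det2_zero_left])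
    (hD''.deriv.symm ▸ hc)
  obtain ⟨ε, hε, hball⟩ := Metric.eventually_nhds_iff_ball.mp
    (hsA.and (hR.continuous.continuousAt.eventually (lt_mem_nhds hR0)))
  have hIoo : Set.Ioo (-ε) ε = Metric.ball 0 ε := by simp [Real.ball_eq_Ioo]
  refine ⟨ε, hε, fun t => t * R t ^ ((3:ℝ)/5), fun t ht => ?_, fun t ht => ?_, by simp, ?_⟩
  · rw [hIoo] at ht
    exact (contDiffAt_id.mul
      (hR.contDiffAt.rpow_const_of_ne (hball t ht).2.ne')).contDiffWithinAt
  · rw [hIoo] at ht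
    have h35 : (3:ℝ)/5 = ((2:ℝ)/3 + 1)⁻¹ := by norm_num
    rw [sA, (hball t ht).1, h35,
      Real.sign_mul_abs_mul_rpow_inv t (by norm_num) (hball t ht).2.le]
  · have hRpow : HasDerivAt (fun t => R t ^ ((3:ℝ)/5)) _ 0 :=
      ((hR.contDiffAt.rpow_const_of_ne hR0.ne').differentiableAt (by simp)).hasDerivAt
    have hτ : HasDerivAt (fun t => t * R t ^ ((3:ℝ)/5)) (1 * R 0 ^ ((3:ℝ)/5) + 0 * _) 0 :=
      (hasDerivAt_id 0).mul hRpow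
    rw [hτ.deriv, one_mul, zero_mul, add_zero]
    exact Real.rpow_pos_of_pos hR0 _
end
end
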